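/- Let g : [0, L] → ℝ be continuous, piecewise C¹ and non-increasing, and let w : [0, L] → ℝ be continuous, piecewise C¹ with w(0) = w(L) = 0. Then ∫₀ᴸ g(s) (w²)'(s) ds ≥ 0. -/

import Mathlib

open Set

open MeasureTheory intervalIntegral

lemma lemA {L a b : ℝ} {g w d : ℝ → ℝ} {s : Finset ℝ}
    (ha : 0 ≤ a) (hab : a ≤ b) (hbL : b ≤ L)
    (hg_mono : AntitoneOn g (Icc 0 L))
    (hg_cont : ContinuousOn g (Icc 0 L))
    (hw_cont : ContinuousOn w (Icc 0 L))
    (hd : ∀ t ∈ Ioo (0:ℝ) L, t ∉ s → HasDerivAt (fun t => (w t) ^ 2) (d t) t)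
    (hd_int : IntervalIntegrable d volume a b) :
    g b * w b ^ 2 - g a * w a ^ 2 ≤ ∫ t in a..b, g t * d t := by
  have hIcc : Icc a b ⊆ Icc 0 L := Icc_subset_Icc ha hbL
  set W : ℝ → ℝ := fun t => w t ^ 2 with hWdef
  have hW_cont : ContinuousOn W (Icc 0 L) := hw_cont.pow 2
  have hW0 : ∀ x, 0 ≤ W x := fun x => sq_nonneg _
  have FTC : ∀ x ∈ Icc a b, (∫ t in a..x, d t) = W x - W a := by
    intro x hx
    refine MeasureTheory.integral_eq_of_hasDerivAt_off_countable_of_le W d hx.1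
      s.countable_toSet (hW_cont.mono (Icc_subset_Icc ha (hx.2.trans hbL))) ?_
      (hd_int.mono_set (uIcc_subset_uIcc left_mem_uIcc (by rw [uIcc_of_le hab]; exact hx)))
    intro y hy
    exact hd y ⟨lt_of_le_of_lt ha hy.1.1, lt_of_lt_of_le hy.1.2 (hx.2.trans hbL)⟩ hy.2
  -- Stieltjes function associated to -g (clamped to [a,b])
  have clamp_mem : ∀ x : ℝ, max a (min b x) ∈ Icc a b := fun x =>
    ⟨le_max_left _ _, max_le hab (min_le_left _ _)⟩
  have clamp_mono : Monotone fun x : ℝ => max a (min b x) :=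
    fun x y hxy => max_le_max le_rfl (min_le_min le_rfl hxy)
  set f : ℝ → ℝ := fun x => -g (max a (min b x)) with hfdef
  have f_mono : Monotone f := fun x y hxy =>
    neg_le_neg (hg_mono (hIcc (clamp_mem x)) (hIcc (clamp_mem y)) (clamp_mono hxy))
  have f_cont : Continuous f := by
    have hc : Continuous fun x : ℝ => max a (min b x) :=
      continuous_const.max (continuous_const.min continuous_id)
    exact (hg_cont.comp_continuous hc fun x => hIcc (clamp_mem x)).neg
  set F : StieltjesFunction ℝ := ⟨f, f_mono, fun x => f_cont.continuousWithinAt⟩ with hFdef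
  have hfeq : ∀ x ∈ Icc a b, f x = -g x := by
    intro x hx
    simp only [hfdef]
    rw [min_eq_right hx.2, max_eq_right hx.1]
  set μ := F.measure with hμdef
  have hμIoc : ∀ p q : ℝ, p ∈ Icc a b → q ∈ Icc a b →
      μ (Ioc p q) = ENNReal.ofReal (g p - g q) := by
    intro p q hp hq
    rw [hμdef, F.measure_Ioc]
    have : F q - F p = g p - g q := by
      show f q - f p = g p - g q
      rw [hfeq q hq, hfeq p hp]; ring
    rw [this]
  have gmono : ∀ {p q : ℝ}, p ∈ Icc a b → q ∈ Icc a b → p ≤ q → g q ≤ g p :=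
    fun {p q} hp hq h => hg_mono (hIcc hp) (hIcc hq) h
  have hba' : g b ≤ g a := gmono (left_mem_Icc.2 hab) (right_mem_Icc.2 hab) hab
  set ν := μ.restrict (Ioc a b) with hνdef
  haveI : IsFiniteMeasure ν := by
    constructor
    rw [hνdef, Measure.restrict_apply_univ,
      hμIoc a b (left_mem_Icc.2 hab) (right_mem_Icc.2 hab)]
    exact ENNReal.ofReal_lt_top
  have hνuniv : (ν univ).toReal = g a - g b := by
    rw [hνdef, Measure.restrict_apply_univ,
      hμIoc a b (left_mem_Icc.2 hab) (right_mem_Icc.2 hab),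
      ENNReal.toReal_ofReal (sub_nonneg.2 hba')]
  have hdI : IntegrableOn d (Ioc a b) volume :=
    (intervalIntegrable_iff_integrableOn_Ioc_of_le hab).1 hd_int
  have hd_meas : AEStronglyMeasurable d (volume.restrict (Ioc a b)) := hdI.aestronglyMeasurable
  -- product measurability and integrability
  set H : ℝ → ℝ → ℝ := fun t x => d t * Set.indicator (Ioi t) (fun _ => (1:ℝ)) x with hHdef
  have hPmeas : AEStronglyMeasurable (Function.uncurry H)
      ((volume.restrict (Ioc a b)).prod ν) := by
    have h1 : AEStronglyMeasurable (fun p : ℝ × ℝ => d p.1)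
        ((volume.restrict (Ioc a b)).prod ν) := hd_meas.comp_fst
    have hset : MeasurableSet {q : ℝ × ℝ | q.1 < q.2} :=
      measurableSet_lt measurable_fst measurable_snd
    have h2 : AEStronglyMeasurable
        (fun p : ℝ × ℝ => Set.indicator {q : ℝ × ℝ | q.1 < q.2} (fun _ => (1:ℝ)) p)
        ((volume.restrict (Ioc a b)).prod ν) :=
      (stronglyMeasurable_const.indicator hset).aestronglyMeasurable
    have heq : Function.uncurry H
        = fun p : ℝ × ℝ => d p.1 * Set.indicator {q : ℝ × ℝ | q.1 < q.2} (fun _ => (1:ℝ)) p := by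
      funext p
      by_cases h : p.1 < p.2 <;>
        simp [hHdef, Function.uncurry, Set.indicator, h, Set.mem_Ioi]
    rw [heq]
    exact h1.mul h2
  have hfst : Integrable (fun p : ℝ × ℝ => d p.1) ((volume.restrict (Ioc a b)).prod ν) := by
    rw [MeasureTheory.integrable_prod_iff hd_meas.comp_fst]
    constructor
    · exact Filter.Eventually.of_forall fun t =>
        (integrable_const (d t) : Integrable (fun _ : ℝ => d t) ν)
    · have h5 : Integrable (fun t => |d t| * (ν univ).toReal) (volume.restrict (Ioc a b)) :=
        hdI.abs.mul_const _
      refine h5.congr (Filter.Eventually.of_forall fun t => ?_)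
      simp [Real.norm_eq_abs, mul_comm, measureReal_def]
  have hPint : Integrable (Function.uncurry H) ((volume.restrict (Ioc a b)).prod ν) := by
    refine hfst.norm.mono' hPmeas (Filter.Eventually.of_forall fun p => ?_)
    have hind : ‖Set.indicator (Ioi p.1) (fun _ => (1:ℝ)) p.2‖ ≤ 1 := by
      by_cases h : p.2 ∈ Ioi p.1 <;> simp [Set.indicator, h]
    calc ‖Function.uncurry H p‖ = ‖d p.1‖ * ‖Set.indicator (Ioi p.1) (fun _ => (1:ℝ)) p.2‖ := by
          simp [hHdef, Function.uncurry, norm_mul]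
      _ ≤ ‖d p.1‖ * 1 := mul_le_mul_of_nonneg_left hind (norm_nonneg _)
      _ = ‖d p.1‖ := mul_one _
  -- the main computation
  have key : (∫ t in a..b, g t * d t)
      = g b * (W b - W a) + ∫ x, (∫ t in Ioc a b, H t x) ∂ν := by
    rw [integral_of_le hab]
    have step1 : (∫ t in Ioc a b, g t * d t)
        = ∫ t in Ioc a b, (g b * d t + (∫ x, Set.indicator (Ioi t) (fun _ => (1:ℝ)) x ∂ν) * d t) := by
      refine setIntegral_congr_fun measurableSet_Ioc fun t ht => ?_
      have h1 : ν (Ioi t) = μ (Ioc t b) := by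
        rw [hνdef, Measure.restrict_apply measurableSet_Ioi]
        congr 1
        ext y
        constructor
        · rintro ⟨h2, _, h4⟩; exact ⟨h2, h4⟩
        · rintro ⟨h2, h3⟩; exact ⟨h2, lt_of_le_of_lt ht.1.le h2, h3⟩
      have h2 : (∫ x, Set.indicator (Ioi t) (fun _ => (1:ℝ)) x ∂ν) = g t - g b := by
        rw [MeasureTheory.integral_indicator_const (1:ℝ) measurableSet_Ioi, measureReal_def, h1,
          hμIoc t b ⟨ht.1.le, ht.2⟩ (right_mem_Icc.2 hab), smul_eq_mul, mul_one,
          ENNReal.toReal_ofReal (sub_nonneg.2 (gmono ⟨ht.1.le, ht.2⟩ (right_mem_Icc.2 hab) ht.2))]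
      rw [h2]; ring
    rw [step1]
    have I1 : Integrable (fun t => g b * d t) (volume.restrict (Ioc a b)) := hdI.const_mul _
    have I2 : Integrable (fun t => (∫ x, Set.indicator (Ioi t) (fun _ => (1:ℝ)) x ∂ν) * d t)
        (volume.restrict (Ioc a b)) := by
      have hmeasf : AEStronglyMeasurable
          (fun t => (∫ x, Set.indicator (Ioi t) (fun _ => (1:ℝ)) x ∂ν))
          (volume.restrict (Ioc a b)) := by
        have : (fun t => (∫ x, Set.indicator (Ioi t) (fun _ => (1:ℝ)) x ∂ν))
            = fun t => (ν (Ioi t)).toReal := by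
          funext t
          rw [MeasureTheory.integral_indicator_const (1:ℝ) measurableSet_Ioi, measureReal_def, smul_eq_mul, mul_one]
        rw [this]
        have hanti : Antitone fun t => (ν (Ioi t)).toReal := by
          intro p q hpq
          exact ENNReal.toReal_mono (measure_ne_top ν _) (measure_mono (Ioi_subset_Ioi hpq))
        exact (hanti.measurable).aestronglyMeasurable
      refine hdI.norm.const_mul ((ν univ).toReal) |>.mono'
        (hmeasf.mul hd_meas) (Filter.Eventually.of_forall fun t => ?_)
      rw [norm_mul]
      have h3 : ‖(∫ x, Set.indicator (Ioi t) (fun _ => (1:ℝ)) x ∂ν)‖ ≤ (ν univ).toReal := by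
        rw [MeasureTheory.integral_indicator_const (1:ℝ) measurableSet_Ioi, measureReal_def, smul_eq_mul, mul_one,
          Real.norm_eq_abs, abs_of_nonneg ENNReal.toReal_nonneg]
        exact ENNReal.toReal_mono (measure_ne_top ν _) (measure_mono (subset_univ _))
      exact mul_le_mul_of_nonneg_right h3 (norm_nonneg _)
    rw [MeasureTheory.integral_add I1 I2]
    congr 1
    · rw [MeasureTheory.integral_const_mul, ← integral_of_le hab,
        FTC b (right_mem_Icc.2 hab)]
    · have swap := MeasureTheory.integral_integral_swap (f := H) hPint
      rw [← swap]
      refine setIntegral_congr_fun measurableSet_Ioc fun t ht => ?_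
      rw [mul_comm, ← MeasureTheory.integral_const_mul]
  -- evaluate the inner integral
  have inner_eq : ∀ᵐ x ∂ν, (∫ t in Ioc a b, H t x) = W x - W a := by
    filter_upwards [ae_restrict_mem measurableSet_Ioc] with x hx
    have h1 : (fun t => H t x) = Set.indicator (Iio x) d := by
      funext t
      by_cases h : t < x <;>
        simp [hHdef, Set.indicator, h, Set.mem_Ioi, Set.mem_Iio]
    rw [h1, MeasureTheory.integral_indicator measurableSet_Iio,
      Measure.restrict_restrict measurableSet_Iio]
    have h2 : Iio x ∩ Ioc a b = Ioo a x := by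
      ext t
      constructor
      · rintro ⟨h3, h4, _⟩; exact ⟨h4, h3⟩
      · rintro ⟨h3, h4⟩; exact ⟨h4, h3, le_trans h4.le hx.2⟩
    rw [h2, ← MeasureTheory.integral_Ioc_eq_integral_Ioo, ← integral_of_le hx.1.le]
    exact FTC x ⟨hx.1.le, hx.2⟩
  have hWint : Integrable (fun x => W x - W a) ν := by
    have h1 : IntegrableOn W (Icc a b) μ :=
      (hW_cont.mono hIcc).integrableOn_compact isCompact_Icc
    exact ((h1.mono_set Ioc_subset_Icc_self).sub (integrable_const _))
  have final : (g a - g b) * (-W a) ≤ ∫ x, (∫ t in Ioc a b, H t x) ∂ν := by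
    rw [integral_congr_ae inner_eq]
    calc (g a - g b) * (-W a) = (ν univ).toReal • (-W a) := by rw [hνuniv, smul_eq_mul]
      _ = ∫ _x, (-W a) ∂ν := (MeasureTheory.integral_const _).symm
      _ ≤ ∫ x, (W x - W a) ∂ν := by
          refine integral_mono (integrable_const _) hWint fun x => ?_
          simp only [neg_le_sub_iff_le_add, le_add_iff_nonneg_left]
          exact hW0 x
  show g b * W b - g a * W a ≤ _
  rw [key]
  nlinarith [final]
  --nlinarith [hW0 a, hW0 b]


theorem integral_nonincreasing_against_derivative_of_square_nonneg
    (L : ℝ) (hL : 0 < L) (g w d : ℝ → ℝ) (s : Finset ℝ)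
    (hg_mono : AntitoneOn g (Icc 0 L))
    (hg_cont : ContinuousOn g (Icc 0 L))
    (hw_cont : ContinuousOn w (Icc 0 L))
    (hd : ∀ t ∈ Ioo (0:ℝ) L, t ∉ s → HasDerivAt (fun t => (w t) ^ 2) (d t) t)
    (hw0 : w 0 = 0) (hwL : w L = 0)
    (hint : IntervalIntegrable (fun t => g t * d t) MeasureTheory.volume 0 L) :
    0 ≤ ∫ t in (0:ℝ)..L, g t * d t := by
  -- integrability of d wherever g does not vanish
  have hdint_of_ne : ∀ u v : ℝ, 0 ≤ u → u ≤ v → v ≤ L → (∀ t ∈ Icc u v, g t ≠ 0) →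
      IntervalIntegrable d MeasureTheory.volume u v := by
    intro u v hu huv hvL hne
    have hsub : uIcc u v ⊆ uIcc 0 L := by
      rw [uIcc_of_le huv, uIcc_of_le hL.le]
      exact Icc_subset_Icc hu hvL
    have hginv : ContinuousOn (fun t => (g t)⁻¹) (uIcc u v) := by
      rw [uIcc_of_le huv]
      exact (hg_cont.mono (Icc_subset_Icc hu hvL)).inv₀ hne
    have h1 : IntervalIntegrable (fun t => g t * d t * (g t)⁻¹) MeasureTheory.volume u v :=
      (hint.mono_set hsub).mul_continuousOn hginv
    rw [intervalIntegrable_iff_integrableOn_Ioc_of_le huv] at h1 ⊢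
    refine h1.congr_fun (fun t ht => ?_) measurableSet_Ioc
    have hgt : g t ≠ 0 := hne t ⟨ht.1.le, ht.2⟩
    show g t * d t * (g t)⁻¹ = d t
    rw [mul_comm (g t) (d t), mul_assoc, mul_inv_cancel₀ hgt, mul_one]
  by_cases hgL : 0 < g L
  · -- g is everywhere positive
    have hd_int : IntervalIntegrable d MeasureTheory.volume 0 L :=
      hdint_of_ne 0 L le_rfl hL.le le_rfl fun t ht =>
        (lt_of_lt_of_le hgL (hg_mono ht (right_mem_Icc.2 hL.le) ht.2)).ne'
    have h := lemA le_rfl hL.le le_rfl hg_mono hg_cont hw_cont hd hd_int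
    rw [hw0, hwL] at h
    simpa using h
  by_cases hg0 : g 0 < 0
  · -- g is everywhere negative
    have hd_int : IntervalIntegrable d MeasureTheory.volume 0 L :=
      hdint_of_ne 0 L le_rfl hL.le le_rfl fun t ht =>
        (lt_of_le_of_lt (hg_mono (left_mem_Icc.2 hL.le) ht ht.1) hg0).ne
    have h := lemA le_rfl hL.le le_rfl hg_mono hg_cont hw_cont hd hd_int
    rw [hw0, hwL] at h
    simpa using h
  push_neg at hgL hg0
  -- now g L ≤ 0 ≤ g 0; g vanishes on [m0, m1]
  set B := {t | t ∈ Icc 0 L ∧ g t ≤ 0} with hBdef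
  have hBc : IsClosed B := by
    have : B = Icc 0 L ∩ g ⁻¹' Iic 0 := by
      ext t; simp [hBdef, and_comm]
    rw [this]
    exact hg_cont.preimage_isClosed_of_isClosed isClosed_Icc isClosed_Iic
  have hBne : B.Nonempty := ⟨L, right_mem_Icc.2 hL.le, hgL⟩
  have hBbdd : BddBelow B := ⟨0, fun t ht => ht.1.1⟩
  set m0 := sInf B with hm0def
  have hm0B : m0 ∈ B := hBc.csInf_mem hBne hBbdd
  have hm0mem : m0 ∈ Icc 0 L := hm0B.1
  have hlt0 : ∀ t ∈ Icc 0 L, t < m0 → 0 < g t := by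
    intro t ht htl
    by_contra h
    push_neg at h
    exact absurd (csInf_le hBbdd ⟨ht, h⟩) (not_le.2 htl)
  set A := {t | t ∈ Icc 0 L ∧ 0 ≤ g t} with hAdef
  have hAc : IsClosed A := by
    have : A = Icc 0 L ∩ g ⁻¹' Ici 0 := by
      ext t; simp [hAdef, and_comm]
    rw [this]
    exact hg_cont.preimage_isClosed_of_isClosed isClosed_Icc isClosed_Ici
  have hAne : A.Nonempty := ⟨0, left_mem_Icc.2 hL.le, hg0⟩
  have hAbdd : BddAbove A := ⟨L, fun t ht => ht.1.2⟩
  set m1 := sSup A with hm1def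
  have hm1A : m1 ∈ A := hAc.csSup_mem hAne hAbdd
  have hm1mem : m1 ∈ Icc 0 L := hm1A.1
  have hlt1 : ∀ t ∈ Icc 0 L, m1 < t → g t < 0 := by
    intro t ht htl
    by_contra h
    push_neg at h
    exact absurd (le_csSup hAbdd ⟨ht, h⟩) (not_le.2 htl)
  have hm01 : m0 ≤ m1 := by
    by_contra h
    push_neg at h
    have hc1 : m1 < (m1 + m0) / 2 := by linarith
    have hc2 : (m1 + m0) / 2 < m0 := by linarith
    have hcmem : (m1 + m0) / 2 ∈ Icc 0 L :=
      ⟨le_trans hm1mem.1 hc1.le, le_trans hc2.le hm0mem.2⟩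
    exact absurd (hlt0 _ hcmem hc2) (not_lt.2 (hlt1 _ hcmem hc1).le)
  have hzero : ∀ t ∈ Icc m0 m1, g t = 0 := by
    intro t ht
    have htmem : t ∈ Icc 0 L := ⟨le_trans hm0mem.1 ht.1, le_trans ht.2 hm1mem.2⟩
    exact le_antisymm (le_trans (hg_mono hm0mem htmem ht.1) hm0B.2)
      (le_trans hm1A.2 (hg_mono htmem hm1mem ht.2))
  -- split the integral
  have i1 : IntervalIntegrable (fun t => g t * d t) MeasureTheory.volume 0 m0 :=
    hint.mono_set (by
      rw [uIcc_of_le hm0mem.1, uIcc_of_le hL.le]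
      exact Icc_subset_Icc le_rfl hm0mem.2)
  have i2 : IntervalIntegrable (fun t => g t * d t) MeasureTheory.volume m0 m1 :=
    hint.mono_set (by
      rw [uIcc_of_le hm01, uIcc_of_le hL.le]
      exact Icc_subset_Icc hm0mem.1 hm1mem.2)
  have i3 : IntervalIntegrable (fun t => g t * d t) MeasureTheory.volume m1 L :=
    hint.mono_set (by
      rw [uIcc_of_le hm1mem.2, uIcc_of_le hL.le]
      exact Icc_subset_Icc hm1mem.1 le_rfl)
  rw [← intervalIntegral.integral_add_adjacent_intervals (i1.trans i2) i3,
    ← intervalIntegral.integral_add_adjacent_intervals i1 i2]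
  -- middle piece vanishes
  have hmid : (∫ t in m0..m1, g t * d t) = 0 := by
    rw [intervalIntegral.integral_congr (g := fun _ => (0:ℝ)) (fun t ht => by
      rw [hzero t (by rwa [uIcc_of_le hm01] at ht)]; ring)]
    simp
  -- first piece
  have p1 : 0 ≤ ∫ t in (0:ℝ)..m0, g t * d t := by
    rcases eq_or_lt_of_le hm0mem.1 with h0 | h0
    · rw [← h0, intervalIntegral.integral_same]
    · have hnonneg : ∀ c ∈ Ico (0:ℝ) m0, 0 ≤ ∫ t in (0:ℝ)..c, g t * d t := by
        intro c hc
        have hcL : c ≤ L := le_trans hc.2.le hm0mem.2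
        have hd_int : IntervalIntegrable d MeasureTheory.volume 0 c :=
          hdint_of_ne 0 c le_rfl hc.1 hcL fun t ht =>
            (hlt0 t ⟨ht.1, le_trans ht.2 hcL⟩ (lt_of_le_of_lt ht.2 hc.2)).ne'
        have h := lemA le_rfl hc.1 hcL hg_mono hg_cont hw_cont hd hd_int
        rw [hw0] at h
        have hgc : 0 < g c := hlt0 c ⟨hc.1, hcL⟩ hc.2
        nlinarith [sq_nonneg (w c)]
      have hten : Filter.Tendsto (fun c => ∫ t in (0:ℝ)..c, g t * d t)
          (nhdsWithin m0 (Ico 0 m0)) (nhds (∫ t in (0:ℝ)..m0, g t * d t)) := by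
        have hcont := intervalIntegral.continuousOn_primitive_interval
          (f := fun t => g t * d t) (a := 0) (b := m0) (μ := MeasureTheory.volume)
          (by rw [uIcc_of_le hm0mem.1]
              exact (intervalIntegrable_iff_integrableOn_Icc_of_le hm0mem.1).1 i1)
        have := (hcont m0 (by rw [uIcc_of_le hm0mem.1]; exact right_mem_Icc.2 hm0mem.1))
        rw [ContinuousWithinAt] at this
        refine this.mono_left (nhdsWithin_mono m0 ?_)
        rw [uIcc_of_le hm0mem.1]
        exact Ico_subset_Icc_self
      haveI : (nhdsWithin m0 (Ico 0 m0)).NeBot := by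
        rw [← mem_closure_iff_nhdsWithin_neBot, closure_Ico h0.ne]
        exact right_mem_Icc.2 hm0mem.1
      exact ge_of_tendsto hten (Filter.eventually_of_mem self_mem_nhdsWithin hnonneg)
  -- third piece
  have p3 : 0 ≤ ∫ t in m1..L, g t * d t := by
    rcases eq_or_lt_of_le hm1mem.2 with h0 | h0
    · rw [h0, intervalIntegral.integral_same]
    · have hnonneg : ∀ c ∈ Ioc m1 L, 0 ≤ ∫ t in c..L, g t * d t := by
        intro c hc
        have hc0 : 0 ≤ c := le_trans hm1mem.1 hc.1.le
        have hd_int : IntervalIntegrable d MeasureTheory.volume c L :=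
          hdint_of_ne c L hc0 hc.2 le_rfl fun t ht =>
            (hlt1 t ⟨le_trans hc0 ht.1, ht.2⟩ (lt_of_lt_of_le hc.1 ht.1)).ne
        have h := lemA hc0 hc.2 le_rfl hg_mono hg_cont hw_cont hd hd_int
        rw [hwL] at h
        have hgc : g c < 0 := hlt1 c ⟨hc0, hc.2⟩ hc.1
        nlinarith [sq_nonneg (w c)]
      have hten : Filter.Tendsto (fun c => ∫ t in c..L, g t * d t)
          (nhdsWithin m1 (Ioc m1 L)) (nhds (∫ t in m1..L, g t * d t)) := by
        have hcont := intervalIntegral.continuousOn_primitive_interval_left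
          (f := fun t => g t * d t) (a := m1) (b := L) (μ := MeasureTheory.volume)
          (by rw [uIcc_of_le hm1mem.2]
              exact (intervalIntegrable_iff_integrableOn_Icc_of_le hm1mem.2).1 i3)
        have := (hcont m1 (by rw [uIcc_of_le hm1mem.2]; exact left_mem_Icc.2 hm1mem.2))
        rw [ContinuousWithinAt] at this
        refine this.mono_left (nhdsWithin_mono m1 ?_)
        rw [uIcc_of_le hm1mem.2]
        exact Ioc_subset_Icc_self
      haveI : (nhdsWithin m1 (Ioc m1 L)).NeBot := by
        rw [← mem_closure_iff_nhdsWithin_neBot, closure_Ioc h0.ne]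
        exact left_mem_Icc.2 hm1mem.2
      exact ge_of_tendsto hten (Filter.eventually_of_mem self_mem_nhdsWithin hnonneg)
  linarith
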